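/- Let f ∈ ℤ[x] be a polynomial of degree n ≥ 1 with leading coefficient a_n ≠ 0, set H_f = max_{0 ≤ i ≤ n−1} |a_i|/|a_n|, and let d and m be positive integers with m ≥ H_f + d + 1. If g ∈ ℤ[x] is a nonconstant polynomial dividing f in ℤ[x], then |g(m)| > d. -/

import Mathlib

open Polynomial

/-- If `m ≥ H_f + d + 1` and `g` is a nonconstant divisor of `f` in `ℤ[x]`,
then `|g(m)| > d`. -/
theorem stmt_8 (f : Polynomial ℤ) (n : ℕ) (hn : 1 ≤ n) (hdeg : f.natDegree = n)
    (m d : ℕ) (hm : 0 < m) (hd : 0 < d)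
    (hmd : ((Finset.range n).sup' (Finset.nonempty_range_iff.mpr (by omega))
        (fun i => (|f.coeff i| : ℝ) / |f.coeff n|)) + d + 1 ≤ (m : ℝ))
    (g : Polynomial ℤ) (hg : 0 < g.natDegree) (hgf : g ∣ f) :
    (d : ℤ) < |g.eval (m : ℤ)| := by
  set H : ℝ := ((Finset.range n).sup' (Finset.nonempty_range_iff.mpr (by omega))
        (fun i => (|f.coeff i| : ℝ) / |f.coeff n|)) with hH
  have hf0 : f ≠ 0 := by
    intro h; rw [h] at hdeg; simp at hdeg; omega
  have han : f.coeff n ≠ 0 := by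
    rw [← hdeg]; exact leadingCoeff_ne_zero.mpr hf0
  have hg0 : g ≠ 0 := fun h => by simp [h] at hg
  have hinj : Function.Injective (Int.castRingHom ℂ) := fun a b h =>
    Int.cast_injective (α := ℂ) h
  set F : Polynomial ℂ := f.map (Int.castRingHom ℂ) with hF
  set G : Polynomial ℂ := g.map (Int.castRingHom ℂ) with hG
  have hFdeg : F.natDegree = n := by
    rw [hF, natDegree_map_eq_of_injective hinj f]; exact hdeg
  have hGdeg : G.natDegree = g.natDegree := natDegree_map_eq_of_injective hinj g
  have hF0 : F ≠ 0 := fun h => hf0 (map_injective _ hinj (by simpa using h))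
  have hG0 : G ≠ 0 := by
    intro h; rw [h] at hGdeg; simp at hGdeg; omega
  have hH0 : 0 ≤ H := by
    rw [hH]
    refine le_trans ?_ (Finset.le_sup' _ (Finset.mem_range.mpr (show 0 < n by omega)))
    positivity
  -- the Cauchy bound of F is at most H + 1
  have hcb : (F.cauchyBound : ℝ) ≤ H + 1 := by
    have hlead : F.leadingCoeff = ((f.coeff n : ℤ) : ℂ) := by
      rw [leadingCoeff, hFdeg, hF, coeff_map]; rfl
    have hsup : Finset.sup (Finset.range F.natDegree) (fun i => ‖F.coeff i‖₊) /
        ‖F.leadingCoeff‖₊ ≤ H.toNNReal := by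
      rw [NNReal.finset_sup_div]
      apply Finset.sup_le
      intro i hi
      rw [hFdeg] at hi
      rw [← NNReal.coe_le_coe, NNReal.coe_div, coe_nnnorm, coe_nnnorm,
        Real.coe_toNNReal _ hH0]
      have h1 : ‖F.coeff i‖ = |((f.coeff i : ℤ) : ℝ)| := by
        rw [hF, coeff_map]
        simpa using Complex.norm_intCast (f.coeff i)
      have h2 : ‖F.leadingCoeff‖ = ((|f.coeff n| : ℤ) : ℝ) := by
        rw [hlead]; simpa using Complex.norm_intCast (f.coeff n)
      rw [h1, h2]
      have h3 := Finset.le_sup' (f := fun i => (|f.coeff i| : ℝ) / |f.coeff n|) hi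
      exact h3
    calc (F.cauchyBound : ℝ) = ((Finset.sup (Finset.range F.natDegree) (fun i => ‖F.coeff i‖₊) /
          ‖F.leadingCoeff‖₊ + 1 : NNReal) : ℝ) := by rw [cauchyBound]
      _ ≤ ((H.toNNReal + 1 : NNReal) : ℝ) := by exact_mod_cast add_le_add_left hsup 1
      _ = H + 1 := by rw [NNReal.coe_add, Real.coe_toNNReal _ hH0, NNReal.coe_one]
  -- every root of G is a root of F, hence within the Cauchy bound
  have hroot : ∀ α ∈ G.roots, (d : ℝ) < ‖(m : ℂ) - α‖ := by
    intro α hα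
    have hαF : α ∈ F.roots := Multiset.mem_of_le (roots.le_of_dvd hF0 (map_dvd _ hgf)) hα
    have hisr : F.IsRoot α := isRoot_of_mem_roots hαF
    have hbd : ‖α‖ < (F.cauchyBound : ℝ) := hisr.norm_lt_cauchyBound hF0
    have h2 : (m : ℝ) - ‖α‖ ≤ ‖(m:ℂ) - α‖ := by
      have := norm_sub_norm_le ((m:ℂ)) α
      simpa using this
    have : ‖(m:ℂ) - α‖ = ‖(m:ℂ) - α‖ := rfl
    rw [this]
    have hn2 : ‖α‖ < H + 1 := lt_of_lt_of_le hbd hcb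
    linarith
  -- factor G over ℂ
  have hsplits : G.Splits := IsAlgClosed.splits G
  have hcard : Multiset.card G.roots = G.natDegree := (splits_iff_card_roots).mp hsplits
  have hfac := C_leadingCoeff_mul_prod_multiset_X_sub_C hcard
  -- evaluate at m and take absolute values
  have heval : ‖G.eval (m : ℂ)‖ =
      ‖G.leadingCoeff‖ *
        (G.roots.map (fun a => ‖(m:ℂ) - a‖)).prod := by
    conv_lhs => rw [← hfac]
    rw [eval_mul, eval_C, norm_mul, eval_multiset_prod]
    congr 1
    rw [Multiset.map_map, show ∀ s : Multiset ℂ, ‖s.prod‖ = (s.map (‖·‖)).prod from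
      fun s => map_multiset_prod (normHom (α := ℂ)) s, Multiset.map_map]
    apply congrArg
    apply Multiset.map_congr rfl
    intro a _
    simp
  -- the roots multiset is nonempty
  obtain ⟨α₀, hα₀⟩ : ∃ α, α ∈ G.roots := by
    rcases Multiset.card_pos_iff_exists_mem.mp (by rw [hcard, hGdeg]; exact hg) with ⟨a, ha⟩
    exact ⟨a, ha⟩
  obtain ⟨M, hM⟩ := Multiset.exists_cons_of_mem
    (Multiset.mem_map_of_mem (fun a => ‖(m:ℂ) - a‖) hα₀)
  have hMone : (1:ℝ) ≤ M.prod := by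
    apply Multiset.one_le_prod
    intro x hx
    have hxmem : x ∈ G.roots.map (fun a => ‖(m:ℂ) - a‖) := by
      rw [hM]; exact Multiset.mem_cons_of_mem hx
    rcases Multiset.mem_map.mp hxmem with ⟨a, ha, rfl⟩
    have := hroot a ha
    have : (1:ℝ) ≤ (d:ℝ) := by exact_mod_cast hd
    linarith [hroot a ha]
  have hlead1 : (1:ℝ) ≤ ‖G.leadingCoeff‖ := by
    have : G.leadingCoeff = ((g.leadingCoeff : ℤ) : ℂ) := by
      rw [leadingCoeff, hGdeg, hG, coeff_map]; rfl
    rw [this]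
    have hgl : g.leadingCoeff ≠ 0 := leadingCoeff_ne_zero.mpr hg0
    have : (1:ℤ) ≤ |g.leadingCoeff| := Int.one_le_abs (by simpa using hgl)
    calc (1:ℝ) ≤ ((|g.leadingCoeff| : ℤ) : ℝ) := by exact_mod_cast this
      _ = ‖((g.leadingCoeff : ℤ) : ℂ)‖ := by
          simp [Complex.norm_intCast, Int.cast_abs]
  have hprod : (d:ℝ) < ‖G.eval (m : ℂ)‖ := by
    rw [heval, hM, Multiset.prod_cons]
    have h1 := hroot α₀ hα₀
    have hd1 : (0:ℝ) < (d:ℝ) := by exact_mod_cast hd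
    calc (d:ℝ) < ‖(m:ℂ) - α₀‖ := h1
      _ ≤ ‖(m:ℂ) - α₀‖ * M.prod := le_mul_of_one_le_right (by positivity) hMone
      _ ≤ ‖G.leadingCoeff‖ * (‖(m:ℂ) - α₀‖ * M.prod) := by
          apply le_mul_of_one_le_left _ hlead1
          positivity
  have hGeval : G.eval (m : ℂ) = ((g.eval (m:ℤ) : ℤ) : ℂ) := by
    rw [hG, eval_map]
    rw [show ((m:ℂ)) = (Int.castRingHom ℂ) ((m:ℤ)) by simp]
    rw [eval₂_at_apply]
    simp
  rw [hGeval] at hprod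
  have : ((d:ℤ):ℝ) < ((|g.eval (m:ℤ)| : ℤ) : ℝ) := by
    have habs : ‖(((g.eval (m:ℤ) : ℤ)) : ℂ)‖ = ((|g.eval (m:ℤ)| : ℤ) : ℝ) := by
      simp [Complex.norm_intCast, Int.cast_abs]
    rw [habs] at hprod
    exact_mod_cast hprod
  exact_mod_cast this
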